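/- arXiv:1209.3220 — 6 statements merged into one kernel-verified Lean document; each statement's English description precedes it below -/
import Mathlib

section
/- An n-order (<_1, …, <_n) on a countably infinite set X satisfies the extension property for the class of finite n-orders (and hence is generic) if and only if: for every choice of elements x_i, y_i ∈ X with x_i <_i y_i for i = 1, …, n (allowing x_i = −∞ or y_i = +∞, meaning no lower/upper constraint in the i-th order), there exists z ∈ X with x_i <_i z <_i y_i for all i. -/
lemma exists_top' {X : Type*} (r : X → X → Prop) (hr : IsStrictTotalOrder X r)
    {T : Finset X} (hT : T.Nonempty) : ∃ m ∈ T, ∀ t ∈ T, ¬ r m t := by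
  classical
  haveI := hr
  letI : LinearOrder X := linearOrderOfSTO r
  obtain ⟨m, hm, hmax⟩ := T.exists_max_image id hT
  refine ⟨m, hm, fun t ht hrt => ?_⟩
  rcases hmax t ht with h | h
  · have ht2 : t = m := h; subst ht2; exact irrefl_of r t hrt
  · exact asymm_of r h hrt

lemma exists_bot' {X : Type*} (r : X → X → Prop) (hr : IsStrictTotalOrder X r)
    {T : Finset X} (hT : T.Nonempty) : ∃ m ∈ T, ∀ t ∈ T, ¬ r t m := by
  haveI := hr
  exact exists_top' (Function.swap r) (IsStrictTotalOrder.swap r) hT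


/-- An `n`-order on a countably infinite set `X` satisfies the extension property
for finite `n`-orders (for every finite `S ⊆ X` and every choice, for each `i`, of a
cut of `S` in the order `<_i`, there is a point of `X` outside `S` realising all the
chosen cuts simultaneously) if and only if: for every choice of `x i, y i`
(allowing `−∞`/`+∞`, encoded by `none`) with `x i <_i y i`, there is `z` with
`x i <_i z <_i y i` for all `i`. -/
theorem stmt_6 {X : Type*} [Countable X] [Infinite X] (n : ℕ)
    (lt : Fin n → X → X → Prop) (hord : ∀ i, IsStrictTotalOrder X (lt i)) :
    (∀ S : Finset X, ∀ D : Fin n → Finset X,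
      (∀ i, D i ⊆ S) →
      (∀ i, ∀ s ∈ D i, ∀ t ∈ S, t ∉ D i → lt i s t) →
      ∃ z : X, z ∉ S ∧ ∀ i, ∀ s ∈ S, (s ∈ D i ↔ lt i s z)) ↔
    (∀ x y : Fin n → Option X,
      (∀ i, ∀ a b : X, x i = some a → y i = some b → lt i a b) →
      ∃ z : X, ∀ i,
        (∀ a : X, x i = some a → lt i a z) ∧
        (∀ b : X, y i = some b → lt i z b)) := by
  classical
  constructor
  · -- extension property → interval property
    intro H x y hxy
    set S : Finset X :=
      (Finset.univ : Finset (Fin n)).biUnion (fun i => (x i).toFinset ∪ (y i).toFinset) with hS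
    have hmemS : ∀ i a, (x i = some a ∨ y i = some a) → a ∈ S := by
      intro i a ha
      simp only [hS, Finset.mem_biUnion, Finset.mem_union, Option.mem_toFinset, Option.mem_def]
      exact ⟨i, Finset.mem_univ i, ha⟩
    set D : Fin n → Finset X :=
      fun i => S.filter (fun s => ∃ a, x i = some a ∧ (lt i s a ∨ s = a)) with hD
    have hDS : ∀ i, D i ⊆ S := fun i => Finset.filter_subset _ _
    have hcut : ∀ i, ∀ s ∈ D i, ∀ t ∈ S, t ∉ D i → lt i s t := by
      intro i s hs t htS htD
      haveI := hord i
      rw [hD, Finset.mem_filter] at hs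
      obtain ⟨hsS, a, hxa, hsa⟩ := hs
      have hta : lt i a t := by
        rcases trichotomous_of (lt i) a t with h | h | h
        · exact h
        · exact absurd (by rw [hD, Finset.mem_filter]; exact ⟨htS, a, hxa, Or.inr h.symm⟩) htD
        · exact absurd (by rw [hD, Finset.mem_filter]; exact ⟨htS, a, hxa, Or.inl h⟩) htD
      rcases hsa with h | h
      · exact trans_of (lt i) h hta
      · exact h ▸ hta
    obtain ⟨z, hzS, hz⟩ := H S D hDS hcut
    refine ⟨z, fun i => ⟨fun a hxa => ?_, fun b hyb => ?_⟩⟩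
    · haveI := hord i
      have haS : a ∈ S := hmemS i a (Or.inl hxa)
      exact (hz i a haS).mp (by rw [hD, Finset.mem_filter]; exact ⟨haS, a, hxa, Or.inr rfl⟩)
    · haveI := hord i
      have hbS : b ∈ S := hmemS i b (Or.inr hyb)
      have hbD : b ∉ D i := by
        rw [hD, Finset.mem_filter]
        rintro ⟨-, a, hxa, h | h⟩
        · exact asymm_of (lt i) (hxy i a b hxa hyb) h
        · exact irrefl_of (lt i) b (h ▸ hxy i a b hxa hyb)
      have hnz : ¬ lt i b z := fun h => hbD ((hz i b hbS).mpr h)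
      rcases trichotomous_of (lt i) z b with h | h | h
      · exact h
      · exact absurd hbS (h ▸ hzS)
      · exact absurd h hnz
  · -- interval property → extension property
    intro H S D hDS hcut
    rcases Nat.eq_zero_or_pos n with hn | hn
    · subst hn
      obtain ⟨z, hz⟩ := Infinite.exists_notMem_finset S
      exact ⟨z, hz, fun i => i.elim0⟩
    set x : Fin n → Option X :=
      fun i => if h : (D i).Nonempty then some (exists_top' (lt i) (hord i) h).choose
        else none with hx
    set y : Fin n → Option X :=
      fun i => if h : (S \ D i).Nonempty then some (exists_bot' (lt i) (hord i) h).choose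
        else none with hy
    have hxspec : ∀ i a, x i = some a → a ∈ D i ∧ ∀ t ∈ D i, ¬ lt i a t := by
      intro i a ha
      by_cases h : (D i).Nonempty
      · simp only [hx, dif_pos h, Option.some.injEq] at ha
        subst ha
        exact (exists_top' (lt i) (hord i) h).choose_spec
      · simp [hx, dif_neg h] at ha
    have hyspec : ∀ i b, y i = some b → b ∈ S \ D i ∧ ∀ t ∈ S \ D i, ¬ lt i t b := by
      intro i b hb
      by_cases h : (S \ D i).Nonempty
      · simp only [hy, dif_pos h, Option.some.injEq] at hb
        subst hb
        exact (exists_bot' (lt i) (hord i) h).choose_spec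
      · simp [hy, dif_neg h] at hb
    have hxsome : ∀ i, (D i).Nonempty → ∃ a, x i = some a := by
      intro i h; rw [hx]; exact ⟨_, dif_pos h⟩
    have hysome : ∀ i, (S \ D i).Nonempty → ∃ b, y i = some b := by
      intro i h; rw [hy]; exact ⟨_, dif_pos h⟩
    obtain ⟨z, hz⟩ := H x y (by
      intro i a b ha hb
      obtain ⟨haD, -⟩ := hxspec i a ha
      obtain ⟨hbD, -⟩ := hyspec i b hb
      rw [Finset.mem_sdiff] at hbD
      exact hcut i a haD b hbD.1 hbD.2)
    have hzS : z ∉ S := by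
      intro hzS
      set i : Fin n := ⟨0, hn⟩
      haveI := hord i
      by_cases hzD : z ∈ D i
      · obtain ⟨a, ha⟩ := hxsome i ⟨z, hzD⟩
        obtain ⟨-, hmax⟩ := hxspec i a ha
        exact hmax z hzD ((hz i).1 a ha)
      · obtain ⟨b, hb⟩ := hysome i ⟨z, Finset.mem_sdiff.mpr ⟨hzS, hzD⟩⟩
        obtain ⟨-, hmin⟩ := hyspec i b hb
        exact hmin z (Finset.mem_sdiff.mpr ⟨hzS, hzD⟩) ((hz i).2 b hb)
    refine ⟨z, hzS, fun i s hsS => ⟨fun hsD => ?_, fun hlt => ?_⟩⟩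
    · haveI := hord i
      obtain ⟨a, ha⟩ := hxsome i ⟨s, hsD⟩
      obtain ⟨haD, hmax⟩ := hxspec i a ha
      have haz : lt i a z := (hz i).1 a ha
      rcases trichotomous_of (lt i) s a with h | h | h
      · exact trans_of (lt i) h haz
      · exact h ▸ haz
      · exact absurd h (hmax s hsD)
    · haveI := hord i
      by_contra hsD
      have hs' : s ∈ S \ D i := Finset.mem_sdiff.mpr ⟨hsS, hsD⟩
      obtain ⟨b, hb⟩ := hysome i ⟨s, hs'⟩
      obtain ⟨hbD, hmin⟩ := hyspec i b hb
      have hzb : lt i z b := (hz i).2 b hb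
      rcases trichotomous_of (lt i) s b with h | h | h
      · exact hmin s hs' h
      · exact asymm_of (lt i) hlt (h ▸ hzb)
      · exact asymm_of (lt i) hlt (trans_of (lt i) hzb h)
end

section
/- (Kronecker's approximation theorem, geometric form) Let c ∈ ℝ^m be a vector whose components are linearly independent over ℚ. Then for every point p ∈ ℝ^m and every ε > 0, there exist t ∈ ℝ and z ∈ ℤ^m such that the Euclidean distance ‖p + t·c − z‖ < ε. In other words, every line in ℝ^m with direction vector c passes within distance ε of a lattice point. -/
/-!
Let `G` be the closure of the subgroup `ℝ c + ℤ^m` and `V` the largest linear subspace contained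
in `G`. Normalising small nonzero elements of `G ∩ Vᗮ` produces, by compactness of the sphere, a
unit vector all of whose real multiples lie in `G`; hence `G ∩ Vᗮ` is discrete. It contains the
projections of `ℤ^m`, so it is a lattice in `Vᗮ`. If `G` were proper, then `Vᗮ ≠ 0`, and a
coordinate of a lattice basis composed with the projection onto `Vᗮ` is a nonzero linear functional
taking integer values on `G`. Such a functional vanishes on `c` and is integral on the standard
basis, which contradicts the `ℚ`-linear independence of the coordinates of `c`.
-/

open Filter Topology Module Submodule

lemma tendsto_floor_div_mul {ε : ℕ → ℝ} (hpos : ∀ n, 0 < ε n) (hε : Tendsto ε atTop (𝓝 0))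
    (r : ℝ) : Tendsto (fun n => (⌊r / ε n⌋ : ℝ) * ε n) atTop (𝓝 r) := by
  have hle : ∀ n, |(⌊r / ε n⌋ : ℝ) * ε n - r| ≤ ε n := fun n => by
    have h := hpos n
    have hup : (⌊r / ε n⌋ : ℝ) * ε n ≤ r := by
      simpa [div_mul_cancel₀ _ h.ne'] using mul_le_mul_of_nonneg_right (Int.floor_le (r / ε n)) h.le
    have hlow : r - ε n ≤ (⌊r / ε n⌋ : ℝ) * ε n := by
      have := mul_le_mul_of_nonneg_right (Int.sub_one_lt_floor (r / ε n)).le h.le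
      rw [sub_mul, one_mul, div_mul_cancel₀ _ h.ne'] at this
      exact this
    rw [abs_le]; constructor <;> linarith
  rw [tendsto_iff_norm_sub_tendsto_zero]
  exact squeeze_zero (fun _ => norm_nonneg _) hle hε

lemma eq_zero_of_forall_mul_mem_int {a : ℝ} (h : ∀ r : ℝ, ∃ n : ℤ, r * a = n) : a = 0 := by
  by_contra ha
  obtain ⟨n, hn⟩ := h (2 * a)⁻¹
  have : ((2 * n : ℤ) : ℝ) = 1 := by
    push_cast; rw [← hn]; field_simp
  have : 2 * n = 1 := by exact_mod_cast this
  omega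

lemma IsZLattice.exists_ne_zero_forall_mem_int {F : Type*} [NormedAddCommGroup F] [NormedSpace ℝ F]
    [FiniteDimensional ℝ F] [Nontrivial F] (L : Submodule ℤ F) [DiscreteTopology L]
    [IsZLattice ℝ L] : ∃ f : F →ₗ[ℝ] ℝ, f ≠ 0 ∧ ∀ x ∈ L, ∃ n : ℤ, f x = n := by
  have := ZLattice.module_free ℝ L
  have := ZLattice.module_finite ℝ L
  let b := Free.chooseBasis ℤ L
  have : Nonempty (Free.ChooseBasisIndex ℤ L) := by
    rw [← Fintype.card_pos_iff, ← finrank_eq_card_chooseBasisIndex, ZLattice.rank ℝ L]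
    exact finrank_pos
  obtain ⟨i⟩ := this
  refine ⟨(b.ofZLatticeBasis ℝ L).coord i, fun h => ?_, fun x hx => ⟨b.repr ⟨x, hx⟩ i, ?_⟩⟩
  · simpa using LinearMap.congr_fun h (b.ofZLatticeBasis ℝ L i)
  · exact b.ofZLatticeBasis_repr_apply ℝ L ⟨x, hx⟩ i

namespace AddSubgroup

section NormedSpace

variable {E : Type*} [NormedAddCommGroup E] [NormedSpace ℝ E]

def lineality (G : AddSubgroup E) : Submodule ℝ E where
  carrier := {x | ∀ r : ℝ, r • x ∈ G}
  zero_mem' r := by simp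
  add_mem' ha hb r := by simpa [smul_add] using G.add_mem (ha r) (hb r)
  smul_mem' r x hx s := by simpa [smul_smul] using hx (s * r)

lemma mem_of_mem_lineality {G : AddSubgroup E} {x : E} (hx : x ∈ G.lineality) : x ∈ G := by
  simpa using hx 1

lemma mem_lineality_of_tendsto_normalize {G : AddSubgroup E} (hG : IsClosed (G : Set E))
    {w : ℕ → E} {u : E} (hwG : ∀ n, w n ∈ G) (hw0 : ∀ n, w n ≠ 0)
    (hw : Tendsto w atTop (𝓝 0)) (hu : Tendsto (fun n => ‖w n‖⁻¹ • w n) atTop (𝓝 u)) :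
    u ∈ G.lineality := by
  intro r
  have hpos n : 0 < ‖w n‖ := norm_pos_iff.mpr (hw0 n)
  have hlim := (tendsto_floor_div_mul hpos (tendsto_norm_zero.comp hw) r).smul hu
  refine hG.mem_of_tendsto hlim (Eventually.of_forall fun n => ?_)
  have : ((⌊r / ‖w n‖⌋ : ℝ) * ‖w n‖) • (‖w n‖⁻¹ • w n) = ⌊r / ‖w n‖⌋ • w n := by
    rw [smul_smul, mul_assoc, mul_inv_cancel₀ (hpos n).ne', mul_one, Int.cast_smul_eq_zsmul]
  rw [this]
  exact G.zsmul_mem (hwG n) _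

end NormedSpace

section InnerProductSpace

variable {E : Type*} [NormedAddCommGroup E] [InnerProductSpace ℝ E] [FiniteDimensional ℝ E]

lemma exists_pos_forall_mem_orthogonal_lineality {G : AddSubgroup E} (hG : IsClosed (G : Set E)) :
    ∃ δ > 0, ∀ w ∈ G, w ∈ G.linealityᗮ → ‖w‖ < δ → w = 0 := by
  by_contra! h
  choose w hwG hwV hwδ hw0 using fun n : ℕ => h (1 / (n + 1)) Nat.one_div_pos_of_nat
  have hsphere n : ‖w n‖⁻¹ • w n ∈ Metric.sphere (0 : E) 1 := by
    simp [norm_smul, hw0 n]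
  obtain ⟨u, hu, φ, hφ, hconv⟩ := (isCompact_sphere (0 : E) 1).tendsto_subseq hsphere
  have hw : Tendsto (w ∘ φ) atTop (𝓝 0) := by
    refine squeeze_zero_norm (fun n => (hwδ (φ n)).le) ?_
    exact tendsto_one_div_add_atTop_nhds_zero_nat.comp hφ.tendsto_atTop
  have huV : u ∈ G.lineality :=
    mem_lineality_of_tendsto_normalize hG (fun n => hwG (φ n)) (fun n => hw0 (φ n)) hw hconv
  have huVperp : u ∈ G.linealityᗮ :=
    G.lineality.isClosed_orthogonal.mem_of_tendsto hconv
      (Eventually.of_forall fun n => G.linealityᗮ.smul_mem _ (hwV (φ n)))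
  have : u = 0 := by
    simpa [G.lineality.inf_orthogonal_eq_bot] using Submodule.mem_inf.mpr ⟨huV, huVperp⟩
  simp [this] at hu

lemma starProjection_orthogonal_lineality_mem {G : AddSubgroup E} {x : E} (hx : x ∈ G) :
    G.linealityᗮ.starProjection x ∈ G := by
  rw [starProjection_orthogonal_val]
  exact G.sub_mem hx (mem_of_mem_lineality (coe_mem _))

theorem exists_ne_zero_forall_mem_int_of_isClosed {G : AddSubgroup E} (hG : IsClosed (G : Set E))
    (hspan : span ℝ (G : Set E) = ⊤) (hne : G ≠ ⊤) :
    ∃ f : E →ₗ[ℝ] ℝ, f ≠ 0 ∧ ∀ x ∈ G, ∃ n : ℤ, f x = n := by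
  set V := G.lineality
  have : Nontrivial Vᗮ := by
    refine Submodule.nontrivial_iff_ne_bot.mpr fun h => hne ?_
    rw [orthogonal_eq_bot_iff] at h
    exact eq_top_iff.mpr fun x _ => mem_of_mem_lineality (h.symm ▸ Submodule.mem_top : x ∈ V)
  let D : Submodule ℤ Vᗮ := (toIntSubmodule G).comap (Vᗮ.subtype.restrictScalars ℤ)
  have : DiscreteTopology D := by
    obtain ⟨δ, hδ, hsmall⟩ := exists_pos_forall_mem_orthogonal_lineality hG
    rw [discreteTopology_iff_isOpen_singleton_zero]
    convert (Metric.isOpen_ball (x := (0 : E)) (ε := δ)).preimage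
      (continuous_subtype_val.comp continuous_subtype_val)
    ext ⟨⟨w, hwV⟩, hwG⟩
    simp only [Set.mem_singleton_iff, Set.mem_preimage, Function.comp_apply, mem_ball_zero_iff]
    refine ⟨fun h => by simp_all, fun h => ?_⟩
    simpa using hsmall w hwG hwV h
  have : IsZLattice ℝ D := by
    refine ⟨eq_top_iff.mpr ?_⟩
    have hsurj : Function.Surjective Vᗮ.orthogonalProjectionOnto := fun y =>
      ⟨y, orthogonalProjectionOnto_mem_subspace_eq_self y⟩
    rw [← LinearMap.range_eq_top.mpr hsurj, LinearMap.range_eq_map, ← hspan, ← span_image]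
    refine span_mono ?_
    rintro _ ⟨x, hx, rfl⟩
    exact starProjection_orthogonal_lineality_mem hx
  obtain ⟨f, hf0, hfD⟩ := IsZLattice.exists_ne_zero_forall_mem_int D
  refine ⟨f ∘ₗ (Vᗮ.orthogonalProjectionOnto : E →ₗ[ℝ] Vᗮ), fun h => hf0 ?_, fun x hx => ?_⟩
  · ext y
    simpa using LinearMap.congr_fun h y
  · exact hfD _ (starProjection_orthogonal_lineality_mem hx)

theorem exists_ne_zero_forall_mem_int_of_not_dense {H : AddSubgroup E} (hH : ¬Dense (H : Set E)) :
    ∃ f : E →ₗ[ℝ] ℝ, f ≠ 0 ∧ ∀ x ∈ H, ∃ n : ℤ, f x = n := by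
  by_cases hspan : span ℝ (H : Set E) = ⊤
  · have hne : H.topologicalClosure ≠ ⊤ := fun h => hH <| by
      rw [dense_iff_closure_eq, ← H.topologicalClosure_coe, h, coe_top]
    obtain ⟨f, hf0, hf⟩ := exists_ne_zero_forall_mem_int_of_isClosed H.isClosed_topologicalClosure
      (eq_top_iff.mpr (hspan ▸ span_mono H.le_topologicalClosure)) hne
    exact ⟨f, hf0, fun x hx => hf x (H.le_topologicalClosure hx)⟩
  · obtain ⟨f, hf0, hf⟩ :=
      exists_dual_map_eq_bot_of_lt_top (lt_top_iff_ne_top.mpr hspan) inferInstance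
    refine ⟨f, hf0, fun x hx => ⟨0, ?_⟩⟩
    simpa using (Submodule.eq_bot_iff _).mp hf _ (Submodule.mem_map_of_mem (subset_span hx))

end InnerProductSpace

end AddSubgroup

section Kronecker

variable {ι : Type*} [Fintype ι]

lemma EuclideanSpace.linearMap_apply_eq_sum [DecidableEq ι] (f : EuclideanSpace ℝ ι →ₗ[ℝ] ℝ)
    (x : EuclideanSpace ℝ ι) : f x = ∑ i, x i * f (EuclideanSpace.single i 1) := by
  conv_lhs => rw [← (EuclideanSpace.basisFun ι ℝ).toBasis.sum_repr x]
  simp [map_sum]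

def kroneckerSubgroup (c : ι → ℝ) : AddSubgroup (EuclideanSpace ℝ ι) where
  carrier := {x | ∃ (t : ℝ) (z : ι → ℤ), ∀ i, x i = t * c i + z i}
  zero_mem' := ⟨0, 0, by simp⟩
  add_mem' := by
    rintro _ _ ⟨t, z, hx⟩ ⟨s, y, hy⟩
    exact ⟨t + s, z + y, fun i => by
      simp only [PiLp.add_apply, hx, hy, Pi.add_apply, Int.cast_add]; ring⟩
  neg_mem' := by
    rintro _ ⟨t, z, hx⟩
    exact ⟨-t, -z, fun i => by
      simp only [PiLp.neg_apply, hx, Pi.neg_apply, Int.cast_neg]; ring⟩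

theorem dense_kroneckerSubgroup {c : ι → ℝ} (hc : LinearIndependent ℚ c) :
    Dense (kroneckerSubgroup c : Set (EuclideanSpace ℝ ι)) := by
  classical
  by_contra hH
  obtain ⟨f, hf0, hf⟩ := AddSubgroup.exists_ne_zero_forall_mem_int_of_not_dense hH
  have hfc : f (WithLp.toLp 2 c) = 0 := eq_zero_of_forall_mul_mem_int fun r => by
    simpa using hf (r • WithLp.toLp 2 c) ⟨r, 0, fun i => by simp⟩
  choose q hq using fun i => hf (EuclideanSpace.single i 1)
    ⟨0, Pi.single i 1, fun j => by simp [Pi.single_apply]⟩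
  have hsum : ∑ i, (q i : ℚ) • c i = 0 := by
    simp_rw [Rat.smul_def, Rat.cast_intCast]
    rw [← hfc, EuclideanSpace.linearMap_apply_eq_sum]
    simp [hq, mul_comm]
  have hq0 i : q i = 0 := by exact_mod_cast Fintype.linearIndependent_iff.mp hc _ hsum i
  exact hf0 <| (EuclideanSpace.basisFun ι ℝ).toBasis.ext fun i => by simp [hq, hq0]

end Kronecker

/-- Kronecker's approximation theorem, geometric form: if the components of
`c ∈ ℝ^m` are linearly independent over `ℚ`, then every line with direction
vector `c` passes within Euclidean distance `ε` of a lattice point. -/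
theorem stmt_7 (m : ℕ) (c : Fin m → ℝ) (hc : LinearIndependent ℚ c)
    (p : Fin m → ℝ) (ε : ℝ) (hε : 0 < ε) :
    ∃ (t : ℝ) (z : Fin m → ℤ),
      Real.sqrt (∑ i, (p i + t * c i - (z i : ℝ)) ^ 2) < ε := by
  obtain ⟨y, ⟨t, z, hy⟩, hdist⟩ := (dense_kroneckerSubgroup hc).exists_dist_lt (WithLp.toLp 2 p) hε
  refine ⟨-t, z, ?_⟩
  rw [EuclideanSpace.dist_eq] at hdist
  convert hdist using 3 with i
  rw [Real.dist_eq, sq_abs, hy]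
  ring
end

section
/- For every positive integer m there exists an m × m real matrix A such that: (a) A is invertible; (b) for each row of A, the entries of that row are linearly independent over ℚ; (c) the last row of A is orthogonal (with respect to the standard inner product on ℝ^m) to each of the other rows. -/
open Finset Polynomial

noncomputable def tc : ℝ := liouvilleNumber 3

lemma tc_trans : Transcendental ℚ tc := by
  intro h
  exact transcendental_liouvilleNumber (by norm_num) ((IsFractionRing.isAlgebraic_iff ℤ ℚ ℝ).mpr h)

lemma tc_aeval_eq_zero {p : ℚ[X]} (hp : aeval tc p = 0) : p = 0 := by
  by_contra h
  exact tc_trans ⟨p, h, hp⟩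

lemma tc_pow_inj : Function.Injective (fun n : ℕ => tc ^ n) := by
  intro a b h
  by_contra hab
  apply tc_trans
  refine ⟨X ^ a - X ^ b, ?_, by simpa using sub_eq_zero.mpr h⟩
  intro h0
  have := congrArg (fun p => Polynomial.coeff p a) h0
  simp [coeff_X_pow, hab] at this

lemma tc_ne_zero : tc ≠ 0 := by
  intro h
  exact tc_trans ⟨X, X_ne_zero, by simp [h]⟩

noncomputable def rowP (m i j : ℕ) : ℚ[X] :=
  if i = m - 1 then X ^ j
  else X ^ ((2*i+2)*j + 1) - X ^ (if j = 0 then (2*i+2)*(m-1) + m else (2*i+2)*(j-1))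

noncomputable def matA (m : ℕ) : Matrix (Fin m) (Fin m) ℝ :=
  fun i j => aeval tc (rowP m (i:ℕ) (j:ℕ))

lemma matA_last {m : ℕ} (i j : Fin m) (hi : (i:ℕ) = m - 1) :
    matA m i j = tc ^ (j:ℕ) := by
  simp [matA, rowP, hi]

lemma matA_ne {m : ℕ} (i j : Fin m) (hi : (i:ℕ) ≠ m - 1) :
    matA m i j = tc ^ ((2*(i:ℕ)+2)*(j:ℕ) + 1) -
      tc ^ (if (j:ℕ) = 0 then (2*(i:ℕ)+2)*(m-1) + m else (2*(i:ℕ)+2)*((j:ℕ)-1)) := by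
  rw [matA, rowP, if_neg hi]
  split_ifs <;> simp

lemma ortho {m : ℕ} (i jL : Fin m) (hi : (i : ℕ) < m - 1) (hjL : (jL : ℕ) = m - 1) :
    ∑ j, matA m jL j * matA m i j = 0 := by
  obtain ⟨n, rfl⟩ : ∃ n, m = n + 1 := ⟨m - 1, by omega⟩
  have hiv : (i : ℕ) ≠ (n+1) - 1 := by omega
  set c : ℕ := 2 * (i:ℕ) + 2 with hc
  have key : ∀ j : Fin (n+1), matA (n+1) jL j * matA (n+1) i j =
      tc ^ ((c+1) * (j:ℕ) + 1) -
      (if (j:ℕ) = 0 then tc ^ ((c+1)*n + 1) else tc ^ ((c+1)*((j:ℕ)-1) + 1)) := by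
    intro j
    rw [matA_last _ _ hjL, matA_ne _ _ hiv, mul_sub, ← pow_add, ← pow_add, ← hc]
    congr 2
    · ring
    · by_cases h0 : (j:ℕ) = 0
      · rw [if_pos h0, if_pos h0, h0]
        congr 1
        simp only [Nat.add_sub_cancel]
        ring
      · obtain ⟨k, hk⟩ : ∃ k, (j:ℕ) = k + 1 := ⟨(j:ℕ)-1, by omega⟩
        rw [if_neg h0, if_neg h0, hk]
        congr 1
        simp only [Nat.add_sub_cancel]
        ring
  rw [Finset.sum_congr rfl (fun j _ => key j), Finset.sum_sub_distrib,
    Fin.sum_univ_eq_sum_range (fun j => tc ^ ((c+1)*j + 1)),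
    Fin.sum_univ_eq_sum_range
      (fun j => if j = 0 then tc ^ ((c+1)*n + 1) else tc ^ ((c+1)*(j-1) + 1)),
    Finset.sum_range_succ, Finset.sum_range_succ']
  simp only [Nat.add_sub_cancel, if_true, if_false, Nat.succ_ne_zero, if_neg (Nat.succ_ne_zero _)]
  ring

lemma rowIndep {m : ℕ} (i : Fin m) : LinearIndependent ℚ (matA m i) := by
  rw [Fintype.linearIndependent_iff]
  intro g hg
  have hP : (∑ j : Fin m, g j • rowP m (i:ℕ) (j:ℕ)) = 0 := by
    apply tc_aeval_eq_zero
    rw [map_sum]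
    simpa [matA] using hg
  intro j0
  by_cases hi : (i:ℕ) = m - 1
  · have h0 := congrArg (fun p => coeff p (j0:ℕ)) hP
    simp only [finset_sum_coeff, coeff_smul, coeff_zero, rowP, if_pos hi, coeff_X_pow,
      smul_eq_mul, mul_ite, mul_one, mul_zero, Fin.val_inj] at h0
    rwa [Finset.sum_ite_eq univ j0 g, if_pos (mem_univ _)] at h0
  · set c : ℕ := 2*(i:ℕ)+2 with hc
    have hm2 : 2 ≤ m := by have := i.isLt; omega
    have hcoeff : ∀ j : Fin m, (rowP m (i:ℕ) (j:ℕ)).coeff (c*(j0:ℕ)+1)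
        = if j = j0 then 1 else 0 := by
      intro j
      rw [rowP, if_neg hi, coeff_sub, coeff_X_pow, coeff_X_pow]
      have h2 : ¬ (c*(j0:ℕ)+1 = if (j:ℕ) = 0 then (2*(i:ℕ)+2)*(m-1) + m
          else (2*(i:ℕ)+2)*((j:ℕ)-1)) := by
        rw [← hc]
        split_ifs with h
        · have hle : c*(j0:ℕ) ≤ c*(m-1) := Nat.mul_le_mul_left _ (by have := j0.isLt; omega)
          omega
        · have hd1 : 2 ∣ c * ((j:ℕ)-1) := Dvd.dvd.mul_right ⟨(i:ℕ)+1, by ring⟩ _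
          have hd2 : 2 ∣ c * (j0:ℕ) := Dvd.dvd.mul_right ⟨(i:ℕ)+1, by ring⟩ _
          omega
      rw [if_neg h2, sub_zero, ← hc]
      by_cases hj : j = j0
      · rw [if_pos (by rw [hj]), if_pos hj]
      · have hne : ¬ (c*(j0:ℕ)+1 = c*(j:ℕ)+1) := by
          intro h
          exact hj (Fin.ext (Nat.eq_of_mul_eq_mul_left (show 0 < c by omega)
            (by omega : c * (j0:ℕ) = c * (j:ℕ))).symm)
        rw [if_neg hne, if_neg hj]
    have h0 := congrArg (fun p => coeff p (c*(j0:ℕ)+1)) hP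
    simp only [finset_sum_coeff, coeff_smul, coeff_zero, smul_eq_mul] at h0
    rw [Finset.sum_congr rfl (fun j _ => by rw [hcoeff j])] at h0
    simp only [mul_ite, mul_one, mul_zero] at h0
    rwa [Finset.sum_ite_eq' univ j0 g, if_pos (mem_univ _)] at h0

lemma detA {m : ℕ} (hm : 0 < m) : (matA m).det ≠ 0 := by
  intro hdet
  obtain ⟨v, hv, hvA⟩ := Matrix.exists_vecMul_eq_zero_iff.mpr hdet
  set L : Fin m := ⟨m-1, by omega⟩ with hL
  have hLval : (L:ℕ) = m - 1 := rfl
  have hvA' : ∀ j : Fin m, ∑ i, v i * matA m i j = 0 := by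
    intro j
    have := congrFun hvA j
    simpa [Matrix.vecMul, dotProduct] using this
  have hne : ∀ i : Fin m, i ≠ L → (i:ℕ) ≠ m - 1 := by
    intro i hiL h
    exact hiL (Fin.ext (by rw [h, hLval]))
  have hsum : ∀ i : Fin m, i ≠ L → ∑ j, matA m L j * matA m i j = 0 := by
    intro i hiL
    exact ortho i L (by have := i.isLt; have := hne i hiL; omega) hLval
  -- Step 1 : v L = 0
  have hvL : v L = 0 := by
    have h0 : ∑ i, v i * ∑ j, matA m L j * matA m i j = 0 := by
      have : ∀ j : Fin m, (∑ i, v i * matA m i j) * matA m L j = 0 := by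
        intro j; rw [hvA' j, zero_mul]
      calc ∑ i, v i * ∑ j, matA m L j * matA m i j
          = ∑ i, ∑ j, v i * matA m i j * matA m L j := by
            refine Finset.sum_congr rfl fun i _ => ?_
            rw [Finset.mul_sum]
            exact Finset.sum_congr rfl fun j _ => by ring
        _ = ∑ j, (∑ i, v i * matA m i j) * matA m L j := by
            rw [Finset.sum_comm]
            exact Finset.sum_congr rfl fun j _ => by rw [Finset.sum_mul]
        _ = 0 := by simp [this]
    rw [Finset.sum_eq_single L (fun i _ hiL => by rw [hsum i hiL, mul_zero])
      (fun h => absurd (mem_univ L) h)] at h0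
    have hpos : 0 < ∑ j : Fin m, matA m L j * matA m L j := by
      refine Finset.sum_pos' (fun j _ => mul_self_nonneg _) ⟨⟨0, hm⟩, mem_univ _, ?_⟩
      rw [matA_last _ _ hLval]
      positivity
    exact (mul_eq_zero.mp h0).resolve_right hpos.ne'
  -- Step 2
  set D : ℕ → ℝ := fun k => ∑ i ∈ univ.erase L, v i * tc ^ ((2*(i:ℕ)+2) * k) with hD
  have hstep : ∀ j : Fin m, (if (j:ℕ) = 0 then tc^m * D (m-1) else D ((j:ℕ)-1))
      = tc * D (j:ℕ) := by
    intro j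
    have h1 := hvA' j
    rw [← Finset.sum_erase_add _ _ (mem_univ L), hvL, zero_mul, add_zero] at h1
    have h2 : ∀ i ∈ univ.erase L, v i * matA m i j
        = v i * tc^((2*(i:ℕ)+2)*(j:ℕ)) * tc
          - (if (j:ℕ) = 0 then v i * tc^((2*(i:ℕ)+2)*(m-1)) * tc^m
             else v i * tc^((2*(i:ℕ)+2)*((j:ℕ)-1))) := by
      intro i hi
      rw [matA_ne _ _ (hne i (Finset.ne_of_mem_erase hi))]
      split_ifs with h0
      · rw [pow_succ, pow_add]; ring
      · rw [pow_succ]; ring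
    rw [Finset.sum_congr rfl h2, Finset.sum_sub_distrib, sub_eq_zero] at h1
    have e1 : ∑ i ∈ univ.erase L, v i * tc^((2*(i:ℕ)+2)*(j:ℕ)) * tc = tc * D (j:ℕ) := by
      rw [hD, Finset.mul_sum]
      exact Finset.sum_congr rfl fun i _ => by ring
    by_cases h0 : (j:ℕ) = 0
    · rw [if_pos h0]
      simp only [if_pos h0] at h1
      have e2 : ∑ i ∈ univ.erase L, v i * tc^((2*(i:ℕ)+2)*(m-1)) * tc^m
          = tc^m * D (m-1) := by
        rw [hD, Finset.mul_sum]
        exact Finset.sum_congr rfl fun i _ => by ring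
      rw [← e1, ← e2, h1]
    · rw [if_neg h0]
      simp only [if_neg h0] at h1
      have e2 : ∑ i ∈ univ.erase L, v i * tc^((2*(i:ℕ)+2)*((j:ℕ)-1)) = D ((j:ℕ)-1) := rfl
      rw [← e1, ← e2, h1]
  have hdown : ∀ k, k ≤ m-1 → D (m-1-k) = tc^k * D (m-1) := by
    intro k
    induction k with
    | zero => intro _; simp
    | succ k ih =>
      intro hk
      have hk' := ih (by omega)
      have hjlt : m-1-k < m := by omega
      have hs := hstep ⟨m-1-k, hjlt⟩
      rw [if_neg (by simp; omega)] at hs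
      have h3 : D (m-1-(k+1)) = tc * D (m-1-k) := by
        rw [show m-1-(k+1) = (m-1-k)-1 by omega]
        exact hs
      rw [h3, hk', pow_succ]
      ring
  have hDj : ∀ j : Fin m, tc^(j:ℕ) * D (j:ℕ) = tc^(m-1) * D (m-1) := by
    intro j
    have hjle : (j:ℕ) ≤ m-1 := by have := j.isLt; omega
    have h4 := hdown (m-1-(j:ℕ)) (by omega)
    rw [show m-1-(m-1-(j:ℕ)) = (j:ℕ) by omega] at h4
    rw [h4, ← mul_assoc, ← pow_add, show (j:ℕ) + (m-1-(j:ℕ)) = m-1 by omega]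
  set u : Fin m → ℝ := fun i => if i = L then (1:ℝ) else tc^(2*(i:ℕ)+3) with hu
  set v' : Fin m → ℝ := fun i => if i = L then -(tc^(m-1) * D (m-1)) else v i with hv'
  have huinj : Function.Injective u := by
    intro a b hab
    rw [hu] at hab
    simp only at hab
    by_cases ha : a = L <;> by_cases hb : b = L
    · rw [ha, hb]
    · exfalso
      rw [if_pos ha, if_neg hb] at hab
      have := tc_pow_inj (show tc^0 = tc^(2*(b:ℕ)+3) by simpa using hab)
      omega
    · exfalso
      rw [if_neg ha, if_pos hb] at hab
      have := tc_pow_inj (show tc^(2*(a:ℕ)+3) = tc^0 by simpa using hab)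
      omega
    · rw [if_neg ha, if_neg hb] at hab
      have := tc_pow_inj hab
      exact Fin.ext (by omega)
  have hVdm : ∀ j : Fin m, ∑ i : Fin m, v' i * u i ^ (j:ℕ) = 0 := by
    intro j
    rw [← Finset.sum_erase_add _ _ (mem_univ L)]
    have eL : v' L * u L ^ (j:ℕ) = -(tc^(m-1) * D (m-1)) := by
      rw [hv', hu]
      simp
    have eRest : ∑ i ∈ univ.erase L, v' i * u i ^ (j:ℕ) = tc^(j:ℕ) * D (j:ℕ) := by
      rw [hD, Finset.mul_sum]
      refine Finset.sum_congr rfl fun i hi => ?_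
      have hiL := Finset.ne_of_mem_erase hi
      rw [hv', hu]
      simp only [if_neg hiL]
      rw [← pow_mul, show (2*(i:ℕ)+3)*(j:ℕ) = (2*(i:ℕ)+2)*(j:ℕ) + (j:ℕ) by ring, pow_add]
      ring
    rw [eRest, eL, hDj j]
    ring
  have hvz := Matrix.eq_zero_of_forall_pow_sum_mul_pow_eq_zero huinj hVdm
  apply hv
  funext i
  by_cases hiL : i = L
  · rw [hiL, hvL]
    simp
  · have h5 := congrFun hvz i
    simpa [hv', if_neg hiL] using h5

/-- For every positive `m` there is an invertible `m × m` real matrix, each of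
whose rows has entries linearly independent over `ℚ`, and whose last row is
orthogonal to all the other rows. -/
theorem stmt_8 (m : ℕ) (hm : 0 < m) :
    ∃ A : Matrix (Fin m) (Fin m) ℝ,
      A.det ≠ 0 ∧
      (∀ i : Fin m, LinearIndependent ℚ (A i)) ∧
      (∀ i : Fin m, (i : ℕ) < m - 1 →
        (∑ j, A ⟨m - 1, by omega⟩ j * A i j) = 0) := by
  exact ⟨matA m, detA hm, fun i => rowIndep i, fun i hi => ortho i ⟨m - 1, by omega⟩ hi rfl⟩
end

section
/- Let m ≥ 2 and let A be an m × m real matrix satisfying: A is invertible, each row has entries linearly independent over ℚ, and the last row is orthogonal to all other rows. Define orders <_1, …, <_{m−1} on ℤ^m by x <_i y iff c_i·x < c_i·y, where c_i is the i-th row of A. Then for any reals x_i < y_i (i = 1, …, m−1), there exists z ∈ ℤ^m with x_i < c_i·z < y_i for all i = 1, …, m−1. Consequently (<_1, …, <_{m−1}) is a generic (m−1)-tuple of right-invariant orders on ℤ^m. -/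
/-!
The vectors `B z`, `z ∈ ℤ^m`, where `B` consists of the first `m - 1` rows of `A`, form a subgroup
`Γ` of `ℝ^(m-1)`. If `Γ` were not dense, its closure `H` would be a proper closed subgroup.
Splitting off the largest linear subspace `V ⊆ H`, the part `H ∩ Vᗮ` is discrete, hence a lattice
in its span, and a coordinate of a lattice basis yields `w ≠ 0` with `⟪w, H⟫ ⊆ ℤ`. Then `k = Bᵀ w`
is an integer vector with `k ⬝ c_m = w ⬝ B c_m = 0` by orthogonality, so the `ℚ`-independence of
the entries of the last row `c_m` forces `k = 0`, and the independence of the rows of `B` forces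
`w = 0`.
-/

open Filter Topology Submodule Matrix

theorem abs_floor_div_mul_sub_le {K : Type*} [Field K] [LinearOrder K] [IsStrictOrderedRing K]
    [FloorRing K] (t : K) {r : K} (hr : 0 < r) : |⌊t / r⌋ * r - t| ≤ r := by
  have hfract : t - ⌊t / r⌋ * r = Int.fract (t / r) * r := by
    rw [← Int.self_sub_floor, sub_mul, div_mul_cancel₀ t hr.ne']
  rw [abs_sub_comm, hfract, abs_of_nonneg (mul_nonneg (Int.fract_nonneg _) hr.le)]
  exact mul_le_of_le_one_left hr.le (Int.fract_lt_one _).le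

namespace AddSubgroup

variable {E : Type*}

/-- The largest linear subspace contained in `H` (for closed `H`, its identity component). -/
def linealitySpace [AddCommGroup E] [Module ℝ E] (H : AddSubgroup E) : Submodule ℝ E where
  carrier := {v | ∀ t : ℝ, t • v ∈ H}
  add_mem' ha hb t := by simpa only [smul_add] using H.add_mem (ha t) (hb t)
  zero_mem' t := by simpa only [smul_zero] using H.zero_mem
  smul_mem' c v hv t := by simpa only [smul_smul] using hv (t * c)

theorem mem_of_mem_linealitySpace [AddCommGroup E] [Module ℝ E] (H : AddSubgroup E) {v : E}
    (hv : v ∈ H.linealitySpace) : v ∈ H := by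
  simpa using hv 1

theorem mem_linealitySpace_of_tendsto [NormedAddCommGroup E] [NormedSpace ℝ E] {H : AddSubgroup E}
    (hH : IsClosed (H : Set E)) {α : Type*} {l : Filter α} [l.NeBot] {x : α → E} {u : E}
    (hxH : ∀ k, x k ∈ H) (hx0 : ∀ k, x k ≠ 0) (hx : Tendsto x l (𝓝 0))
    (hu : Tendsto (fun k ↦ ‖x k‖⁻¹ • x k) l (𝓝 u)) : u ∈ H.linealitySpace := by
  intro t
  -- `⌊t / ‖x k‖⌋ • x k ∈ H` tends to `t • u`
  have hr : Tendsto (fun k ↦ ‖x k‖) l (𝓝 0) := by simpa using hx.norm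
  have hscal : Tendsto (fun k ↦ (⌊t / ‖x k‖⌋ : ℝ) * ‖x k‖) l (𝓝 t) := by
    have := squeeze_zero_norm (f := fun k ↦ (⌊t / ‖x k‖⌋ : ℝ) * ‖x k‖ - t)
      (fun k ↦ abs_floor_div_mul_sub_le t (norm_pos_iff.2 (hx0 k))) hr
    simpa using this.add_const t
  refine hH.mem_of_tendsto ((hscal.smul hu).congr fun k ↦ ?_)
    (Eventually.of_forall fun k ↦ H.zsmul_mem (hxH k) ⌊t / ‖x k‖⌋)
  rw [smul_smul, mul_assoc, mul_inv_cancel₀ (norm_ne_zero_iff.2 (hx0 k)), mul_one,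
    Int.cast_smul_eq_zsmul]

variable [NormedAddCommGroup E] [InnerProductSpace ℝ E] [FiniteDimensional ℝ E]

theorem exists_pos_forall_mem_orthogonal_linealitySpace {H : AddSubgroup E}
    (hH : IsClosed (H : Set E)) :
    ∃ ε > 0, ∀ x ∈ H, x ∈ H.linealitySpaceᗮ → ‖x‖ < ε → x = 0 := by
  -- otherwise the directions of small elements of `H ∩ Vᗮ` accumulate at a unit vector,
  -- which lies in both `V` and `Vᗮ`
  by_contra! hcon
  choose x hxH hxV hxε hx0 using fun k : ℕ ↦ hcon (1 / (k + 1)) Nat.one_div_pos_of_nat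
  have hsphere : ∀ k, ‖x k‖⁻¹ • x k ∈ Metric.sphere (0 : E) 1 := fun k ↦ by
    simp [norm_smul, hx0 k]
  obtain ⟨u, hu, φ, hφ, hlim⟩ := (isCompact_sphere (0 : E) 1).tendsto_subseq hsphere
  have hx : Tendsto x atTop (𝓝 0) :=
    squeeze_zero_norm (fun k ↦ (hxε k).le) tendsto_one_div_add_atTop_nhds_zero_nat
  have huV : u ∈ H.linealitySpace := mem_linealitySpace_of_tendsto hH (fun k ↦ hxH (φ k))
    (fun k ↦ hx0 (φ k)) (hx.comp hφ.tendsto_atTop) hlim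
  have huV' : u ∈ H.linealitySpaceᗮ := (isClosed_orthogonal _).mem_of_tendsto hlim
    (Eventually.of_forall fun k ↦ smul_mem _ _ (hxV (φ k)))
  have hu0 : u = 0 := inner_self_eq_zero.mp (inner_right_of_mem_orthogonal huV huV')
  simp [hu0] at hu

end AddSubgroup

section

variable {E : Type*} [NormedAddCommGroup E] [InnerProductSpace ℝ E] [FiniteDimensional ℝ E]

theorem Submodule.exists_ne_zero_inner_mem_int_of_discrete [Nontrivial E] (L : Submodule ℤ E)
    [DiscreteTopology L] : ∃ w : E, w ≠ 0 ∧ ∀ x ∈ L, ∃ k : ℤ, inner ℝ w x = k := by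
  by_cases hL : span ℝ (L : Set E) = ⊤
  · have : IsZLattice ℝ L := ⟨hL⟩
    let b := (Module.Free.chooseBasis ℤ L).ofZLatticeBasis ℝ L
    obtain ⟨i⟩ := b.index_nonempty
    refine ⟨(InnerProductSpace.toDual ℝ E).symm (b.coord i).toContinuousLinearMap, fun h ↦ ?_,
      fun x hx ↦ ⟨(Module.Free.chooseBasis ℤ L).repr ⟨x, hx⟩ i, ?_⟩⟩
    · simpa [InnerProductSpace.toDual_symm_apply] using congrArg (inner ℝ · (b i)) h
    · rw [InnerProductSpace.toDual_symm_apply]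
      exact Module.Basis.ofZLatticeBasis_repr_apply ℝ L _ ⟨x, hx⟩ i
  · obtain ⟨w, hw, hw0⟩ := exists_mem_ne_zero_of_ne_bot (mt orthogonal_eq_bot_iff.1 hL)
    exact ⟨w, hw0, fun x hx ↦ ⟨0, by simpa using inner_left_of_mem_orthogonal (subset_span hx) hw⟩⟩

theorem AddSubgroup.exists_ne_zero_inner_mem_int_of_isClosed {H : AddSubgroup E}
    (hH : IsClosed (H : Set E)) (hne : H ≠ ⊤) :
    ∃ w : E, w ≠ 0 ∧ ∀ x ∈ H, ∃ k : ℤ, inner ℝ w x = k := by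
  set V := H.linealitySpace
  have hV : V ≠ ⊤ := fun h ↦
    hne (eq_top_iff.2 fun x _ ↦ H.mem_of_mem_linealitySpace (Submodule.eq_top_iff'.1 h x))
  have : Nontrivial Vᗮ := Submodule.nontrivial_iff_ne_bot.2 (mt orthogonal_eq_bot_iff.1 hV)
  let L : Submodule ℤ Vᗮ := H.toIntSubmodule.comap (Vᗮ.subtype.restrictScalars ℤ)
  obtain ⟨ε, hε, hsmall⟩ := exists_pos_forall_mem_orthogonal_linealitySpace hH
  have : DiscreteTopology L := discreteTopology_iff_isOpen_singleton_zero.2 <|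
    Metric.isOpen_singleton_iff.2 ⟨ε, hε, fun y hy ↦ Subtype.ext <| Subtype.ext <|
      hsmall _ y.2 y.1.2 (by simpa using hy)⟩
  obtain ⟨u, hu0, hu⟩ := exists_ne_zero_inner_mem_int_of_discrete L
  refine ⟨u, by simpa using hu0, fun x hx ↦ ?_⟩
  have hPx : Vᗮ.orthogonalProjectionOnto x ∈ L := by
    show ((Vᗮ.orthogonalProjectionOnto x : Vᗮ) : E) ∈ H
    rw [← starProjection_apply, eq_sub_of_add_eq' (starProjection_add_starProjection_orthogonal x)]
    exact H.sub_mem hx (H.mem_of_mem_linealitySpace (coe_mem _))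
  rw [← inner_orthogonalProjectionOnto_eq_of_mem_left]
  exact hu _ hPx

theorem AddSubgroup.exists_ne_zero_inner_mem_int_of_not_dense {Γ : AddSubgroup E}
    (hΓ : ¬ Dense (Γ : Set E)) : ∃ w : E, w ≠ 0 ∧ ∀ x ∈ Γ, ∃ k : ℤ, inner ℝ w x = k := by
  have hne : Γ.topologicalClosure ≠ ⊤ := fun h ↦ hΓ <| by
    rw [dense_iff_closure_eq, ← AddSubgroup.topologicalClosure_coe, h, AddSubgroup.coe_top]
  obtain ⟨w, hw0, hw⟩ :=
    Γ.topologicalClosure.exists_ne_zero_inner_mem_int_of_isClosed Γ.isClosed_topologicalClosure hne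
  exact ⟨w, hw0, fun x hx ↦ hw x (Γ.le_topologicalClosure hx)⟩

end

theorem DenseRange.exists_forall_mem_Ioo {α ι : Type*} [Finite ι] {f : α → ι → ℝ}
    (hf : DenseRange f) {x y : ι → ℝ} (hxy : ∀ i, x i < y i) :
    ∃ z, ∀ i, x i < f z i ∧ f z i < y i :=
  hf.exists_mem_open (isOpen_set_pi Set.finite_univ fun _ _ ↦ isOpen_Ioo)
    (Set.univ_pi_nonempty_iff.2 fun i ↦ Set.nonempty_Ioo.2 (hxy i))
    |>.imp fun _ hz i ↦ hz i (Set.mem_univ i)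

theorem Matrix.denseRange_mulVec_intCast {ι κ : Type*} [Fintype ι] [Fintype κ]
    (B : Matrix ι κ ℝ) (hB : LinearIndependent ℝ B) {a : κ → ℝ} (ha : LinearIndependent ℚ a)
    (hBa : B *ᵥ a = 0) : DenseRange fun z : κ → ℤ ↦ B *ᵥ fun j ↦ (z j : ℝ) := by
  classical
  let ψ : (κ → ℤ) →+ EuclideanSpace ℝ ι :=
    ((WithLp.linearEquiv 2 ℝ (ι → ℝ)).symm.toLinearMap ∘ₗ B.mulVecLin).toAddMonoidHom.comp
      ((Int.castAddHom ℝ).compLeft κ)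
  suffices hψ : Dense (ψ.range : Set (EuclideanSpace ℝ ι)) by
    rw [AddMonoidHom.coe_range] at hψ
    exact (WithLp.ofLp_surjective 2).denseRange.comp hψ (PiLp.continuous_ofLp 2 _)
  by_contra hnd
  obtain ⟨w, hw0, hw⟩ := AddSubgroup.exists_ne_zero_inner_mem_int_of_not_dense hnd
  have hinner (z : κ → ℤ) : inner ℝ w (ψ z) = (w.ofLp ᵥ* B) ⬝ᵥ fun j ↦ (z j : ℝ) := by
    rw [EuclideanSpace.inner_eq_star_dotProduct, star_trivial, dotProduct_comm, ← dotProduct_mulVec]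
    rfl
  choose k hk using fun j ↦ hw _ (AddMonoidHom.mem_range.2 ⟨Pi.single j 1, rfl⟩)
  have hwB : w.ofLp ᵥ* B = fun j ↦ (k j : ℝ) := by
    ext j
    rw [← hk j, hinner]
    simp [dotProduct, Pi.single_apply]
  have hk0 : ∀ j, k j = 0 := by
    have hsum : ∑ j, (k j : ℚ) • a j = 0 := by
      have h : (w.ofLp ᵥ* B) ⬝ᵥ a = 0 := by rw [← dotProduct_mulVec, hBa, dotProduct_zero]
      simpa [hwB, dotProduct, Rat.smul_def] using h
    exact_mod_cast Fintype.linearIndependent_iff.1 ha _ hsum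
  have hw : w.ofLp = 0 := funext <| Fintype.linearIndependent_iff.1 hB w.ofLp <| by
    rw [← vecMul_eq_sum, hwB]
    ext j
    simp [hk0]
  exact hw0 (by simpa using congrArg (WithLp.toLp 2) hw)

/-- If `A` is an invertible `m × m` real matrix (`m ≥ 2`) whose rows each have
entries linearly independent over `ℚ`, and whose last row is orthogonal to the
others, then the first `m - 1` rows define a generic `(m-1)`-tuple of
right-invariant orders on `ℤ^m`: any prescribed open intervals for the values
`c_i·z` contain a common lattice point. -/
theorem stmt_11 (m : ℕ) (hm : 2 ≤ m) (A : Matrix (Fin m) (Fin m) ℝ)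
    (hdet : A.det ≠ 0)
    (hrows : ∀ i : Fin m, LinearIndependent ℚ (A i))
    (horth : ∀ i : Fin m, (i : ℕ) < m - 1 →
      (∑ j, A ⟨m - 1, by omega⟩ j * A i j) = 0) :
    (∀ x y : Fin (m - 1) → ℝ, (∀ i, x i < y i) →
      ∃ z : Fin m → ℤ, ∀ i : Fin (m - 1),
        x i < (∑ j, A ⟨i, by omega⟩ j * (z j : ℝ)) ∧
          (∑ j, A ⟨i, by omega⟩ j * (z j : ℝ)) < y i) ∧
    (∀ a b : Fin (m - 1) → (Fin m → ℤ),
      (∀ i : Fin (m - 1),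
        (∑ j, A ⟨i, by omega⟩ j * (a i j : ℝ)) < ∑ j, A ⟨i, by omega⟩ j * (b i j : ℝ)) →
      ∃ z : Fin m → ℤ, ∀ i : Fin (m - 1),
        (∑ j, A ⟨i, by omega⟩ j * (a i j : ℝ)) < (∑ j, A ⟨i, by omega⟩ j * (z j : ℝ)) ∧
          (∑ j, A ⟨i, by omega⟩ j * (z j : ℝ)) < ∑ j, A ⟨i, by omega⟩ j * (b i j : ℝ)) := by
  have hle : m - 1 ≤ m := Nat.sub_le m 1
  let B : Matrix (Fin (m - 1)) (Fin m) ℝ := A.submatrix (Fin.castLE hle) id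
  have hB : LinearIndependent ℝ B :=
    (Matrix.linearIndependent_rows_of_isUnit ((A.isUnit_iff_isUnit_det).2 hdet.isUnit)).comp _
      (Fin.castLE_injective hle)
  have hBa : B *ᵥ A ⟨m - 1, by omega⟩ = 0 := funext fun i ↦ by
    simpa [B, Matrix.mulVec, dotProduct, mul_comm] using horth (Fin.castLE hle i) i.2
  have hbox (x y : Fin (m - 1) → ℝ) (hxy : ∀ i, x i < y i) : ∃ z : Fin m → ℤ, ∀ i,
      x i < (B *ᵥ fun j ↦ (z j : ℝ)) i ∧ (B *ᵥ fun j ↦ (z j : ℝ)) i < y i :=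
    (B.denseRange_mulVec_intCast hB (hrows _) hBa).exists_forall_mem_Ioo hxy
  exact ⟨hbox, fun a b ↦ hbox _ _⟩
end

section
/- For all positive integers m and n with m > n, the free abelian group ℤ^m admits an n-tuple of right-invariant linear orders which is generic (i.e., is the generic n-order on a countable set). -/
/-!
Order `ℤ^m` by the `n` linear forms `w ↦ (A *ᵥ w) i` given by the rows of a real `n × m` matrix
`A`. These orders are strict total orders as soon as every row is injective on `ℤ^m`, they are
automatically translation invariant, and they are generic as soon as `A` maps `ℤ^m` onto a dense
subset of `ℝ^n`. Both conditions hold for a residual set of matrices, so by the Baire category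
theorem some `A` satisfies both. For the second condition, a rational matrix `B` has an integer
kernel vector `v` because `n < m`, and if `M *ᵥ v = t` then the matrices `B + k⁻¹ • M`, which tend
to `B`, send `k • v` to `t`; so the matrices hitting a given `t` are dense.
-/

open Filter Topology Set Function

namespace Matrix

variable {ι κ : Type*} [Fintype κ]

theorem dense_setOf_mulVec_apply_ne_zero {v : κ → ℝ} (hv : v ≠ 0) (i : ι) :
    Dense {A : Matrix ι κ ℝ | (A *ᵥ v) i ≠ 0} := by
  classical
  obtain ⟨j, hj⟩ := Function.ne_iff.1 hv
  intro A
  by_cases hA : (A *ᵥ v) i = 0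
  · have hlim : Tendsto (fun s : ℝ => A + s • single i j 1) (𝓝[≠] 0) (𝓝 A) :=
      ((continuous_const.add (continuous_id.smul continuous_const)).tendsto' 0 A
        (by simp)).mono_left nhdsWithin_le_nhds
    refine mem_closure_of_tendsto hlim (eventually_mem_nhdsWithin.mono fun s hs => ?_)
    simp_all [add_mulVec, single_mulVec]
  · exact subset_closure hA

theorem eventually_residual_mulVec_intCast_apply_ne_zero [Finite ι] :
    ∀ᶠ A in residual (Matrix ι κ ℝ), ∀ i, ∀ v : κ → ℤ, v ≠ 0 → (A *ᵥ (Int.cast ∘ v)) i ≠ 0 := by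
  refine eventually_countable_forall.2 fun i => eventually_countable_forall.2 fun v => ?_
  by_cases hv : v = 0
  · exact Eventually.of_forall fun _ h => absurd hv h
  have hv' : (Int.cast ∘ v : κ → ℝ) ≠ 0 :=
    fun h => hv (Int.cast_injective.comp_left (h.trans (by ext; simp)))
  refine mem_of_superset (residual_of_dense_open ?_ (dense_setOf_mulVec_apply_ne_zero hv' i))
    fun A hA _ => hA
  exact isOpen_ne_fun (by fun_prop) continuous_const

theorem exists_intVec_ne_zero_mulVec_eq_zero [Fintype ι] (q : Matrix ι κ ℚ)
    (h : Fintype.card ι < Fintype.card κ) :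
    ∃ v : κ → ℤ, v ≠ 0 ∧ q *ᵥ (Int.cast ∘ v) = 0 := by
  have hker : LinearMap.ker q.mulVecLin ≠ ⊥ :=
    LinearMap.ker_ne_bot_of_finrank_lt (by simpa [Module.finrank_fintype_fun_eq_card] using h)
  obtain ⟨u, hu, hu0⟩ := (Submodule.ne_bot_iff _).1 hker
  obtain ⟨b, hb⟩ := IsLocalization.exist_integer_multiples_of_finite (nonZeroDivisors ℤ) u
  choose v hv using hb
  have hvu : (Int.cast ∘ v : κ → ℚ) = (b : ℤ) • u := funext fun j => by simpa using hv j
  refine ⟨v, ?_, ?_⟩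
  · rintro rfl
    exact hu0 ((smul_eq_zero_iff_right (nonZeroDivisors.coe_ne_zero b)).1 (by simpa using hvu.symm))
  · rw [hvu, mulVec_smul, ← mulVecLin_apply, LinearMap.mem_ker.1 hu, smul_zero]

theorem exists_mulVec_eq {K : Type*} [Field K] {v : κ → K} (hv : v ≠ 0) (t : ι → K) :
    ∃ M : Matrix ι κ K, M *ᵥ v = t := by
  classical
  obtain ⟨j, hj⟩ : ∃ j, v j ≠ 0 := Function.ne_iff.1 hv
  exact ⟨vecMulVec t (Pi.single j (v j)⁻¹), by simp [vecMulVec_mulVec, hj]⟩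

theorem mem_closure_setOf_mulVec_intCast_eq (t : ι → ℝ) {B : Matrix ι κ ℝ} {v : κ → ℤ}
    (hv : v ≠ 0) (hB : B *ᵥ (Int.cast ∘ v) = 0) :
    B ∈ closure {A : Matrix ι κ ℝ | ∃ w : κ → ℤ, A *ᵥ (Int.cast ∘ w) = t} := by
  have hv' : (Int.cast ∘ v : κ → ℝ) ≠ 0 :=
    fun h => hv (Int.cast_injective.comp_left (h.trans (by ext; simp)))
  obtain ⟨M, hM⟩ := exists_mulVec_eq hv' t
  have hlim : Tendsto (fun k : ℕ => B + (k : ℝ)⁻¹ • M) atTop (𝓝 B) := by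
    simpa using tendsto_const_nhds.add ((tendsto_inv_atTop_nhds_zero_nat (𝕜 := ℝ)).smul_const M)
  refine mem_closure_of_tendsto hlim ((eventually_ne_atTop 0).mono fun k hk => ⟨k • v, ?_⟩)
  have hkv : (Int.cast ∘ (k • v) : κ → ℝ) = (k : ℝ) • (Int.cast ∘ v) := by
    ext j; simp
  rw [hkv, add_mulVec, mulVec_smul, hB, smul_mulVec, mulVec_smul, hM, smul_zero, zero_add,
    smul_smul, inv_mul_cancel₀ (by exact_mod_cast hk), one_smul]

theorem dense_setOf_mulVec_intCast_eq [Fintype ι] (h : Fintype.card ι < Fintype.card κ)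
    (t : ι → ℝ) : Dense {A : Matrix ι κ ℝ | ∃ w : κ → ℤ, A *ᵥ (Int.cast ∘ w) = t} := by
  have hrat : DenseRange fun q : Matrix ι κ ℚ => q.map ((↑) : ℚ → ℝ) :=
    DenseRange.piMap fun _ => DenseRange.piMap fun _ => Rat.denseRange_cast
  refine dense_closure.1 (hrat.mono ?_)
  rintro _ ⟨q, rfl⟩
  obtain ⟨v, hv, hqv⟩ := q.exists_intVec_ne_zero_mulVec_eq_zero h
  refine mem_closure_setOf_mulVec_intCast_eq t hv (funext fun i => ?_)
  have hcast := RingHom.map_mulVec (Rat.castHom ℝ) q (Int.cast ∘ v) i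
  rw [hqv] at hcast
  simpa [comp_def] using hcast.symm

theorem eventually_residual_denseRange_mulVec_intCast [Fintype ι]
    (h : Fintype.card ι < Fintype.card κ) :
    ∀ᶠ A in residual (Matrix ι κ ℝ), DenseRange fun w : κ → ℤ => A *ᵥ (Int.cast ∘ w) := by
  obtain ⟨B, hBc, hB0, hB⟩ := TopologicalSpace.exists_countable_basis (ι → ℝ)
  have hU : ∀ U ∈ B, ∀ᶠ A in residual (Matrix ι κ ℝ), ∃ w : κ → ℤ, A *ᵥ (Int.cast ∘ w) ∈ U := by
    intro U hU
    obtain ⟨t, ht⟩ := nonempty_iff_ne_empty.2 (ne_of_mem_of_not_mem hU hB0)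
    refine residual_of_dense_open ?_ ((dense_setOf_mulVec_intCast_eq h t).mono ?_)
    · simp only [Set.ofPred_exists]
      exact isOpen_iUnion fun w => (hB.isOpen hU).preimage (by fun_prop)
    · rintro A ⟨w, hw⟩
      exact ⟨w, hw ▸ ht⟩
  filter_upwards [(eventually_countable_ball hBc).2 hU] with A hA
  exact hB.dense_iff.2 fun U hU _ => let ⟨w, hw⟩ := hA U hU; ⟨_, hw, w, rfl⟩

theorem exists_forall_injective_mulVec_intCast_apply_and_denseRange [Fintype ι]
    (h : Fintype.card ι < Fintype.card κ) :
    ∃ A : Matrix ι κ ℝ, (∀ i, Injective fun w : κ → ℤ => (A *ᵥ (Int.cast ∘ w)) i) ∧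
      DenseRange fun w : κ → ℤ => A *ᵥ (Int.cast ∘ w) := by
  have : BaireSpace (Matrix ι κ ℝ) := inferInstanceAs (BaireSpace (ι → κ → ℝ))
  obtain ⟨s, -, hs, hsA⟩ := eventually_residual.1
    (eventually_residual_mulVec_intCast_apply_ne_zero.and
      (eventually_residual_denseRange_mulVec_intCast h))
  obtain ⟨A, hA⟩ := hs.nonempty
  obtain ⟨hne, hdense⟩ := hsA A hA
  refine ⟨A, fun i x y hxy => ?_, hdense⟩
  by_contra hxy'
  refine hne i (x - y) (sub_ne_zero.2 hxy') ?_
  have hsub : (Int.cast ∘ (x - y) : κ → ℝ) = Int.cast ∘ x - Int.cast ∘ y := by ext; simp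
  rw [hsub, mulVec_sub, Pi.sub_apply, sub_eq_zero]
  exact hxy

end Matrix

open Matrix

theorem stmt_12_general (m n : ℕ) (hmn : n < m) :
    ∃ lt : Fin n → (Fin m → ℤ) → (Fin m → ℤ) → Prop,
      (∀ i, IsStrictTotalOrder (Fin m → ℤ) (lt i)) ∧
      (∀ i, ∀ x y g : Fin m → ℤ, lt i x y → lt i (x + g) (y + g)) ∧
      (∀ x y : Fin n → (Fin m → ℤ), (∀ i, lt i (x i) (y i)) →
        ∃ z : Fin m → ℤ, ∀ i, lt i (x i) z ∧ lt i z (y i)) := by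
  obtain ⟨A, hinj, hdense⟩ :=
    exists_forall_injective_mulVec_intCast_apply_and_denseRange (ι := Fin n) (κ := Fin m)
      (by simpa using hmn)
  let f : Fin n → (Fin m → ℤ) → ℝ := fun i w => (A *ᵥ (Int.cast ∘ w)) i
  refine ⟨fun i => (· < ·) on f i, fun i => (hinj i).isStrictTotalOrder_onFun _,
    fun i x y g hxy => ?_, fun x y hxy => ?_⟩
  · have hadd : ∀ u : Fin m → ℤ, (Int.cast ∘ (u + g) : Fin m → ℝ) = Int.cast ∘ u + Int.cast ∘ g :=
      fun u => by ext; simp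
    simpa [f, onFun, hadd, mulVec_add] using hxy
  · obtain ⟨z, hz⟩ := hdense.exists_mem_open (isOpen_set_pi finite_univ fun i _ => isOpen_Ioo)
      (univ_pi_nonempty_iff.2 fun i => nonempty_Ioo.2 (hxy i))
    exact ⟨z, fun i => hz i (mem_univ i)⟩

/-- For positive integers `m > n`, the free abelian group `ℤ^m` admits a generic
`n`-tuple of right-invariant linear orders. -/
theorem stmt_12 (m n : ℕ) (hn : 0 < n) (hmn : n < m) :
    ∃ lt : Fin n → (Fin m → ℤ) → (Fin m → ℤ) → Prop,
      (∀ i, IsStrictTotalOrder (Fin m → ℤ) (lt i)) ∧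
      (∀ i, ∀ x y g : Fin m → ℤ, lt i x y → lt i (x + g) (y + g)) ∧
      (∀ x y : Fin n → (Fin m → ℤ), (∀ i, lt i (x i) (y i)) →
        ∃ z : Fin m → ℤ, ∀ i, lt i (x i) z ∧ lt i z (y i)) :=
  stmt_12_general m n hmn
end

section
/- Let G be a group with a right-invariant linear order <, let A ≤ G be a subgroup, and suppose I is an interval of G (with respect to <) contained in A with I nonempty. If the restricted orders (<_2, …, <_n) on A fail the genericity intersection condition (there exist a_i <_i b_i in A, i = 2, …, n, with no a ∈ A satisfying a_i <_i a <_i b_i for all i), then the full tuple (<_1 := <, <_2, …, <_n) on G is not generic, where <_2, …, <_n are right-invariant orders on G extending those on A. -/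
/-- Inductive step: if some nonempty interval `I` of the first order `<₀` on `G`
is contained in a subgroup `A`, and the restrictions of the remaining orders to
`A` fail the genericity intersection condition, then the full tuple of
right-invariant orders on `G` is not generic. -/
theorem stmt_19 {G : Type*} [Group G] (n : ℕ)
    (lt : Fin (n + 1) → G → G → Prop)
    (hord : ∀ i, IsStrictTotalOrder G (lt i))
    (hinv : ∀ i, ∀ x y g : G, lt i x y → lt i (x * g) (y * g))
    (A : Subgroup G) (u v : G) (huv : lt 0 u v)
    (hI : {g : G | lt 0 u g ∧ lt 0 g v} ⊆ (A : Set G))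
    (hne : {g : G | lt 0 u g ∧ lt 0 g v}.Nonempty)
    (a b : Fin (n + 1) → G)
    (hab : ∀ i : Fin (n + 1), i ≠ 0 → a i ∈ A ∧ b i ∈ A ∧ lt i (a i) (b i))
    (hfail : ∀ g ∈ A, ¬ (∀ i : Fin (n + 1), i ≠ 0 → lt i (a i) g ∧ lt i g (b i))) :
    ∃ x y : Fin (n + 1) → G,
      (∀ i, lt i (x i) (y i)) ∧
      ∀ z : G, ¬ (∀ i, lt i (x i) z ∧ lt i z (y i)) := by
  refine ⟨fun i => if i = 0 then u else a i, fun i => if i = 0 then v else b i, ?_, ?_⟩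
  · intro i
    by_cases h : i = 0
    · simp [h, huv]
    · simp [h, (hab i h).2.2]
  · intro z hz
    have h0 := hz 0
    simp at h0
    have hzA : z ∈ A := hI h0
    apply hfail z hzA
    intro i hi
    have := hz i
    simpa [hi] using this
end
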